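/- Let k be an algebraically closed field of characteristic 2, K a function field of one variable over k, v a place of K, f ∈ H, and a, b, c, d ∈ K with a·d ≠ b·c. Set g := (a⁴·f + b⁴)/(c⁴·f + d⁴) ∈ H. Then f is pseudo-tame at v if and only if g is pseudo-tame at v. (Pseudo-tameness at a place is invariant under the action of Γ = PGL₂(K⁴).) -/

import Mathlib

/-- A place of a function field `K` over `k`. -/
structure Place (k K : Type*) [Field k] [Field K] [Algebra k K] where
  v : K → ℤ
  v_mul : ∀ x y : K, x ≠ 0 → y ≠ 0 → v (x * y) = v x + v y
  v_add : ∀ x y : K, x ≠ 0 → y ≠ 0 → x + y ≠ 0 → min (v x) (v y) ≤ v (x + y)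
  v_surj : ∀ n : ℤ, ∃ x : K, x ≠ 0 ∧ v x = n
  v_const : ∀ c : k, c ≠ 0 → v (algebraMap k K c) = 0

/-- `K` is a function field of one variable over `k`. -/
def IsFunctionFieldOneVar (k K : Type*) [Field k] [Field K] [Algebra k K] : Prop :=
  ∃ x : K, Transcendental k x ∧
    FiniteDimensional (IntermediateField.adjoin k ({x} : Set K)) K

/-- `f ∈ H = K \ K²` is pseudo-tame at a place `v`: setting `t := f - c` (`c` the
residue of `f` at `v`) if `v f ≥ 0`, and `t := 1/f` if `v f < 0`, there is `h` in
the valuation ring `O_v` such that `v (t + h⁴)` is odd. -/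
def PseudoTameAt {k K : Type*} [Field k] [Field K] [Algebra k K]
    (P : Place k K) (f : K) : Prop :=
  ∃ t : K,
    ((0 ≤ P.v f ∧ ∃ c : k, t = f - algebraMap k K c ∧ t ≠ 0 ∧ 0 < P.v t) ∨
      (P.v f < 0 ∧ t = f⁻¹)) ∧
    ∃ h : K, (h = 0 ∨ 0 ≤ P.v h) ∧ t + h ^ 4 ≠ 0 ∧ Odd (P.v (t + h ^ 4))

/-!
Say that `x ∈ K` is odd modulo fourth powers at `v` if `v (x + u⁴)` is odd for some `u ∈ K`.
In characteristic 2 this property is visibly invariant under `x ↦ x + u⁴` and `x ↦ e⁴ x`, and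
also under `x ↦ x⁻¹`, because `x⁻¹ + u⁻⁴ = (x + u⁴) / (x u⁴)`; these maps generate the action of
`PGL₂(K⁴)`. Pseudo-tameness is the same property: `t` differs from `f` by the fourth power of a
constant, or is `f⁻¹`, and the witness may be taken in `O_v`, since `v (t + u⁴) = 4 v(u)` is even
when `v u < 0 ≤ v t`.

The converse direction needs residues in `k`. If `x ∈ O_v` had none, every `x - c` would be a unit,
hence so would every `p(x)`, `p ∈ k[X]` nonzero, as `k` is algebraically closed. But `K` has
transcendence degree one, so it is algebraic over `k[x]`, and an element of valuation `1` cannot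
be algebraic over a ring on which `v` vanishes, since its equation would have a unique term of
least valuation.
-/

open Polynomial

open scoped IntermediateField.algebraAdjoinAdjoin in
theorem IsFunctionFieldOneVar.isAlgebraic_adjoin_of_transcendental {k K : Type*} [Field k]
    [Field K] [Algebra k K] (hK : IsFunctionFieldOneVar k K) {x : K} (hx : Transcendental k x) :
    Algebra.IsAlgebraic (Algebra.adjoin k {x}) K := by
  obtain ⟨x₀, -, hfin⟩ := hK
  have : Algebra.IsAlgebraic (Algebra.adjoin k {x₀}) K :=
    .trans (Algebra.adjoin k {x₀}) (IntermediateField.adjoin k {x₀}) K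
  have htrdeg : Algebra.trdeg k K ≤ Cardinal.mk ({x} : Set K) := by
    simpa using Algebra.IsAlgebraic.trdeg_le_cardinalMk k ({x₀} : Set K)
  have hind : AlgebraicIndependent k (Subtype.val : ({x} : Set K) → K) :=
    algebraicIndependent_unique_type_iff.mpr hx
  have := (hind.isTranscendenceBasis_of_trdeg_le_of_finite htrdeg).isAlgebraic
  rwa [Subtype.range_val] at this

theorem mobius_eq_pow_four_mul_inv_add {K : Type*} [Field K] [CharP K 2] {a b c d x : K}
    (hc : c ≠ 0) (hx : c ^ 4 * x + d ^ 4 ≠ 0) :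
    (a ^ 4 * x + b ^ 4) / (c ^ 4 * x + d ^ 4) =
      ((a * d + b * c) / c ^ 2) ^ 4 * (x + (d / c) ^ 4)⁻¹ + (a / c) ^ 4 := by
  field_simp
  grind

namespace Place

variable {k K : Type*} [Field k] [Field K] [Algebra k K] (P : Place k K)

theorem v_one : P.v 1 = 0 := by
  have h := P.v_mul 1 1 one_ne_zero one_ne_zero
  rw [mul_one] at h
  omega

theorem v_neg (x : K) : P.v (-x) = P.v x := by
  rcases eq_or_ne x 0 with rfl | hx
  · rw [neg_zero]
  have h := P.v_mul (-1) (-1) (by simp) (by simp)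
  rw [neg_one_mul, neg_neg, v_one] at h
  rw [neg_eq_neg_one_mul, P.v_mul _ _ (by simp) hx]
  omega

theorem v_inv {x : K} (hx : x ≠ 0) : P.v x⁻¹ = -P.v x := by
  have h := P.v_mul x x⁻¹ hx (inv_ne_zero hx)
  rw [mul_inv_cancel₀ hx, v_one] at h
  omega

theorem v_pow {x : K} (hx : x ≠ 0) (n : ℕ) : P.v (x ^ n) = n * P.v x := by
  induction n with
  | zero => simp [v_one]
  | succ n ih =>
    rw [pow_succ, P.v_mul _ _ (pow_ne_zero _ hx) hx, ih]
    push_cast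
    ring

theorem v_add_eq_of_lt {x y : K} (hx : x ≠ 0) (hy : y ≠ 0) (hxy : x + y ≠ 0)
    (h : P.v x < P.v y) : P.v (x + y) = P.v x := by
  have hle := P.v_add x y hx hy hxy
  have hge := P.v_add (x + y) (-y) hxy (neg_ne_zero.mpr hy) (by rwa [add_neg_cancel_right])
  rw [add_neg_cancel_right, v_neg] at hge
  omega

theorem le_v_add {N : ℤ} {x y : K} (hx : x = 0 ∨ N ≤ P.v x) (hy : y = 0 ∨ N ≤ P.v y) :
    x + y = 0 ∨ N ≤ P.v (x + y) := by
  by_cases hx0 : x = 0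
  · rwa [hx0, zero_add]
  by_cases hy0 : y = 0
  · rw [hy0, add_zero]
    exact hx
  refine or_iff_not_imp_left.mpr fun hxy => ?_
  exact (le_min (hx.resolve_left hx0) (hy.resolve_left hy0)).trans (P.v_add x y hx0 hy0 hxy)

theorem le_v_sum {ι : Type*} (s : Finset ι) (g : ι → K) {N : ℤ}
    (hg : ∀ i ∈ s, g i ≠ 0 → N ≤ P.v (g i)) (hs : ∑ i ∈ s, g i ≠ 0) :
    N ≤ P.v (∑ i ∈ s, g i) :=
  (Finset.sum_induction g (fun y => y = 0 ∨ N ≤ P.v y) (fun _ _ => P.le_v_add) (.inl rfl)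
    fun i hi => (em (g i = 0)).imp_right (hg i hi)).resolve_left hs

def unitSubmonoid : Submonoid K where
  carrier := {y | y ≠ 0 ∧ P.v y = 0}
  mul_mem' := fun {x y} ⟨hx, hvx⟩ ⟨hy, hvy⟩ =>
    ⟨mul_ne_zero hx hy, by rw [P.v_mul x y hx hy, hvx, hvy, add_zero]⟩
  one_mem' := ⟨one_ne_zero, P.v_one⟩

theorem aeval_mem_unitSubmonoid [IsAlgClosed k] {x : K}
    (hx : ∀ c : k, x - algebraMap k K c ∈ P.unitSubmonoid) {p : k[X]} (hp : p ≠ 0) :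
    aeval x p ∈ P.unitSubmonoid := by
  have hlc : p.leadingCoeff ≠ 0 := leadingCoeff_ne_zero.mpr hp
  rw [(IsAlgClosed.splits p).eq_prod_roots, map_mul, aeval_C, map_multiset_prod,
    Multiset.map_map]
  refine mul_mem ⟨by simpa using hlc, P.v_const _ hlc⟩ (multiset_prod_mem _ ?_)
  simp only [Multiset.mem_map, Function.comp_apply, map_sub, aeval_X, aeval_C]
  rintro _ ⟨c, -, rfl⟩
  exact hx c

theorem v_eq_zero_of_isAlgebraic {S : Subalgebra k K} (hS : ∀ s ∈ S, s ≠ 0 → P.v s = 0)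
    {z : K} (hz : z ≠ 0) (halg : IsAlgebraic S z) : P.v z = 0 := by
  obtain ⟨p, hp, hpz⟩ := halg
  by_contra hvz
  set term : ℕ → K := fun i => (p.coeff i : K) * z ^ i
  have hterm : ∀ i ∈ p.support, term i ≠ 0 ∧ P.v (term i) = i * P.v z := by
    intro i hi
    have hc : (p.coeff i : K) ≠ 0 := by simpa using mem_support_iff.mp hi
    refine ⟨mul_ne_zero hc (pow_ne_zero _ hz), ?_⟩
    rw [P.v_mul _ _ hc (pow_ne_zero _ hz), hS _ (p.coeff i).2 hc, P.v_pow hz, zero_add]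
  obtain ⟨j, hj, hmin⟩ :=
    p.support.exists_min_image (fun i => (i : ℤ) * P.v z) (nonempty_support_iff.mpr hp)
  have hsum : ∑ i ∈ p.support.erase j, term i = -term j := by
    rw [aeval_def, eval₂_eq_sum, sum_def, ← Finset.add_sum_erase _ _ hj] at hpz
    exact eq_neg_of_add_eq_zero_right hpz
  have hbound : P.v (term j) + 1 ≤ P.v (∑ i ∈ p.support.erase j, term i) := by
    refine P.le_v_sum _ _ (fun i hi _ => ?_) (by rw [hsum]; exact neg_ne_zero.mpr (hterm j hj).1)
    obtain ⟨hij, hi⟩ := Finset.mem_erase.mp hi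
    have hne : (i : ℤ) * P.v z ≠ j * P.v z := fun h =>
      hij (by exact_mod_cast mul_right_cancel₀ hvz h)
    rw [(hterm i hi).2, (hterm j hj).2]
    have := hmin i hi
    omega
  rw [hsum, v_neg] at hbound
  omega

theorem exists_residue [IsAlgClosed k] (hK : IsFunctionFieldOneVar k K) {x : K}
    (hx : 0 ≤ P.v x) : ∃ c : k, x = algebraMap k K c ∨ 0 < P.v (x - algebraMap k K c) := by
  by_contra! hno
  have hunit : ∀ c : k, x - algebraMap k K c ∈ P.unitSubmonoid := by
    intro c
    have hne : x - algebraMap k K c ≠ 0 := sub_ne_zero.mpr (hno c).1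
    have hc : -algebraMap k K c = 0 ∨ 0 ≤ P.v (-algebraMap k K c) := by
      rcases eq_or_ne c 0 with rfl | hc
      · simp
      · exact .inr (by rw [v_neg, P.v_const c hc])
    have hsub := P.le_v_add (.inr hx) hc
    rw [← sub_eq_add_neg] at hsub
    exact ⟨hne, le_antisymm (hno c).2 (hsub.resolve_left hne)⟩
  have hpoly {p : k[X]} (hp : p ≠ 0) := P.aeval_mem_unitSubmonoid hunit hp
  have htr : Transcendental k x :=
    transcendental_iff.mpr fun p hpx => by_contra fun hp => (hpoly hp).1 hpx
  have hS : ∀ s ∈ Algebra.adjoin k {x}, s ≠ 0 → P.v s = 0 := by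
    rw [Algebra.adjoin_singleton_eq_range_aeval]
    rintro _ ⟨p, rfl⟩ hs
    exact (hpoly (by rintro rfl; simp at hs)).2
  obtain ⟨z, hz, hvz⟩ := P.v_surj 1
  have := P.v_eq_zero_of_isAlgebraic hS hz
    ((hK.isAlgebraic_adjoin_of_transcendental htr).isAlgebraic z)
  omega

def OddModFourthPowers (x : K) : Prop :=
  ∃ u : K, x + u ^ 4 ≠ 0 ∧ Odd (P.v (x + u ^ 4))

variable {P}

theorem oddModFourthPowers_add_pow_four_iff [CharP K 2] {x : K} (u : K) :
    P.OddModFourthPowers (x + u ^ 4) ↔ P.OddModFourthPowers x := by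
  have shift : ∀ x u w : K, x + u ^ 4 + w ^ 4 = x + (u + w) ^ 4 := by grind
  constructor
  · rintro ⟨w, hw⟩
    exact ⟨u + w, by rwa [← shift]⟩
  · rintro ⟨w, hw⟩
    exact ⟨u + w, by rwa [shift, ← add_assoc, CharTwo.add_self_eq_zero, zero_add]⟩

theorem OddModFourthPowers.pow_four_mul {x e : K} (he : e ≠ 0) (h : P.OddModFourthPowers x) :
    P.OddModFourthPowers (e ^ 4 * x) := by
  obtain ⟨u, hne, hodd⟩ := h
  have he4 : e ^ 4 ≠ 0 := pow_ne_zero 4 he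
  refine ⟨e * u, ?_⟩
  rw [mul_pow, ← mul_add]
  refine ⟨mul_ne_zero he4 hne, ?_⟩
  rw [P.v_mul _ _ he4 hne, P.v_pow he]
  obtain ⟨m, hm⟩ := hodd
  exact ⟨2 * P.v e + m, by push_cast; omega⟩

theorem oddModFourthPowers_pow_four_mul_iff {x e : K} (he : e ≠ 0) :
    P.OddModFourthPowers (e ^ 4 * x) ↔ P.OddModFourthPowers x := by
  refine ⟨fun h => ?_, .pow_four_mul he⟩
  simpa [← mul_assoc, ← mul_pow, he] using h.pow_four_mul (inv_ne_zero he)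

theorem OddModFourthPowers.inv {x : K} (h : P.OddModFourthPowers x) :
    P.OddModFourthPowers x⁻¹ := by
  rcases eq_or_ne x 0 with rfl | hx
  · rwa [inv_zero]
  obtain ⟨u, hne, hodd⟩ := h
  by_cases hvx : Odd (P.v x)
  · refine ⟨0, by simpa using hx, ?_⟩
    simpa [P.v_inv hx] using hvx
  rcases eq_or_ne u 0 with rfl | hu
  · rw [zero_pow four_ne_zero, add_zero] at hodd
    exact absurd hodd hvx
  have hu4 : u ^ 4 ≠ 0 := pow_ne_zero 4 hu
  have key : x⁻¹ + u⁻¹ ^ 4 = (x + u ^ 4) / (x * u ^ 4) := by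
    field_simp
    ring
  refine ⟨u⁻¹, ?_⟩
  rw [key]
  refine ⟨div_ne_zero hne (mul_ne_zero hx hu4), ?_⟩
  rw [div_eq_mul_inv, P.v_mul _ _ hne (inv_ne_zero (mul_ne_zero hx hu4)),
    P.v_inv (mul_ne_zero hx hu4), P.v_mul _ _ hx hu4, P.v_pow hu]
  obtain ⟨m, hm⟩ := hodd
  rw [Int.not_odd_iff_even] at hvx
  obtain ⟨n, hn⟩ := hvx
  exact ⟨m - n - 2 * P.v u, by push_cast; omega⟩

theorem oddModFourthPowers_inv_iff {x : K} :
    P.OddModFourthPowers x⁻¹ ↔ P.OddModFourthPowers x :=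
  ⟨fun h => inv_inv x ▸ h.inv, .inv⟩

theorem not_oddModFourthPowers_pow_four [CharP K 2] (w : K) : ¬ P.OddModFourthPowers (w ^ 4) := by
  rintro ⟨u, hne, hodd⟩
  have hsum : w ^ 4 + u ^ 4 = (w + u) ^ 4 := by grind
  rw [hsum] at hne hodd
  rw [P.v_pow (pow_ne_zero_iff (by norm_num) |>.mp hne)] at hodd
  obtain ⟨m, hm⟩ := hodd
  omega

theorem OddModFourthPowers.exists_integral {x : K} (hx : x ≠ 0) (hvx : 0 ≤ P.v x)
    (h : P.OddModFourthPowers x) :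
    ∃ u : K, (u = 0 ∨ 0 ≤ P.v u) ∧ x + u ^ 4 ≠ 0 ∧ Odd (P.v (x + u ^ 4)) := by
  obtain ⟨u, hne, hodd⟩ := h
  refine ⟨u, ?_, hne, hodd⟩
  by_contra! hu
  have hvu4 : P.v (u ^ 4) = 4 * P.v u := by rw [P.v_pow hu.1]; rfl
  rw [add_comm, P.v_add_eq_of_lt (pow_ne_zero 4 hu.1) hx (by rwa [add_comm]) (by omega),
    hvu4] at hodd
  obtain ⟨m, hm⟩ := hodd
  omega

theorem oddModFourthPowers_mobius_iff [CharP K 2] {a b c d : K} (habcd : a * d ≠ b * c) (x : K) :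
    P.OddModFourthPowers ((a ^ 4 * x + b ^ 4) / (c ^ 4 * x + d ^ 4)) ↔
      P.OddModFourthPowers x := by
  rcases eq_or_ne c 0 with rfl | hc
  · have ha : a ≠ 0 := by rintro rfl; simp at habcd
    have hd : d ≠ 0 := by rintro rfl; simp at habcd
    have haffine : (a ^ 4 * x + b ^ 4) / (0 ^ 4 * x + d ^ 4) = (a / d) ^ 4 * x + (b / d) ^ 4 := by
      field_simp
      ring
    rw [haffine, oddModFourthPowers_add_pow_four_iff, oddModFourthPowers_pow_four_mul_iff
      (div_ne_zero ha hd)]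
  have hden : c ^ 4 * x + d ^ 4 = c ^ 4 * (x + (d / c) ^ 4) := by field_simp
  by_cases hpole : x + (d / c) ^ 4 = 0
  · rw [hden, hpole, mul_zero, div_zero, CharTwo.add_eq_zero.mp hpole]
    exact iff_of_false (by simpa using not_oddModFourthPowers_pow_four (P := P) 0)
      (not_oddModFourthPowers_pow_four _)
  have he : (a * d + b * c) / c ^ 2 ≠ 0 :=
    div_ne_zero (fun h => habcd (CharTwo.add_eq_zero.mp h)) (pow_ne_zero 2 hc)
  rw [mobius_eq_pow_four_mul_inv_add hc (by rw [hden]; exact mul_ne_zero (pow_ne_zero 4 hc) hpole),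
    oddModFourthPowers_add_pow_four_iff, oddModFourthPowers_pow_four_mul_iff he,
    oddModFourthPowers_inv_iff, oddModFourthPowers_add_pow_four_iff]

theorem pseudoTameAt_iff_oddModFourthPowers [IsAlgClosed k] [CharP K 2]
    (hK : IsFunctionFieldOneVar k K) (f : K) :
    PseudoTameAt P f ↔ P.OddModFourthPowers f := by
  have hfourth (c : k) : ∃ w : K, algebraMap k K c = w ^ 4 :=
    let ⟨γ, hγ⟩ := IsAlgClosed.exists_pow_nat_eq c four_pos
    ⟨algebraMap k K γ, by rw [← map_pow, hγ]⟩
  constructor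
  · rintro ⟨t, ht, u, -, hne, hodd⟩
    have ht' : P.OddModFourthPowers t := ⟨u, hne, hodd⟩
    rcases ht with ⟨-, c, rfl, -⟩ | ⟨-, rfl⟩
    · obtain ⟨w, hw⟩ := hfourth c
      rwa [hw, CharTwo.sub_eq_add, oddModFourthPowers_add_pow_four_iff] at ht'
    · exact oddModFourthPowers_inv_iff.mp ht'
  intro h
  have hf4 (w : K) : f ≠ w ^ 4 := fun hw => not_oddModFourthPowers_pow_four w (hw ▸ h)
  have hf : f ≠ 0 := by simpa using hf4 0
  rcases lt_or_ge (P.v f) 0 with hneg | hnonneg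
  · refine ⟨f⁻¹, .inr ⟨hneg, rfl⟩, ?_⟩
    exact (oddModFourthPowers_inv_iff.mpr h).exists_integral (inv_ne_zero hf)
      (by rw [P.v_inv hf]; omega)
  obtain ⟨c, hc | hpos⟩ := P.exists_residue hK hnonneg
  · obtain ⟨w, hw⟩ := hfourth c
    exact absurd (hc.trans hw) (hf4 w)
  obtain ⟨w, hw⟩ := hfourth c
  have hne : f - algebraMap k K c ≠ 0 := sub_ne_zero.mpr (hw ▸ hf4 w)
  have ht : P.OddModFourthPowers (f - algebraMap k K c) := by
    rwa [hw, CharTwo.sub_eq_add, oddModFourthPowers_add_pow_four_iff]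
  exact ⟨_, .inl ⟨hnonneg, c, rfl, hne, hpos⟩, ht.exists_integral hne hpos.le⟩

end Place

theorem pseudoTame_Gamma_invariant_general
    (k K : Type*) [Field k] [IsAlgClosed k] [CharP k 2] [Field K] [Algebra k K]
    (hK : IsFunctionFieldOneVar k K) (P : Place k K)
    (f : K)
    (a b c d : K) (habcd : a * d ≠ b * c) :
    PseudoTameAt P f ↔
      PseudoTameAt P ((a ^ 4 * f + b ^ 4) / (c ^ 4 * f + d ^ 4)) := by
  have : CharP K 2 := charP_of_injective_algebraMap (algebraMap k K).injective 2
  rw [P.pseudoTameAt_iff_oddModFourthPowers hK, P.pseudoTameAt_iff_oddModFourthPowers hK,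
    Place.oddModFourthPowers_mobius_iff habcd]

/-- Pseudo-tameness at a place is invariant under the action of `Γ = PGL₂(K⁴)`
by fractional linear transformations. -/
theorem pseudoTame_Gamma_invariant
    (k K : Type*) [Field k] [IsAlgClosed k] [CharP k 2] [Field K] [Algebra k K]
    (hK : IsFunctionFieldOneVar k K) (P : Place k K)
    (f : K) (hf : ∀ y : K, y ^ 2 ≠ f)
    (a b c d : K) (habcd : a * d ≠ b * c) :
    PseudoTameAt P f ↔
      PseudoTameAt P ((a ^ 4 * f + b ^ 4) / (c ^ 4 * f + d ^ 4)) :=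
  pseudoTame_Gamma_invariant_general k K hK P f a b c d habcd
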